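/- The matrix M = αΠ_sym + β|φ⁺⟩⟨φ⁺| − |00⟩⟨00| on ℂ²⊗ℂ² (computational basis) has eigenvalues 0, α, α + (β − 1 + √(β²+1))/2, and α + (β − 1 − √(β²+1))/2. Consequently M ⪰ 0 if and only if α ≥ 0 and α ≥ (−β + 1 + √(β²+1))/2. -/

import Mathlib

open ComplexOrder Polynomial
open scoped BigOperators

/-- The projector onto the symmetric subspace of `ℂ² ⊗ ℂ²`: `Π_sym = (𝕀 + SWAP)/2`. -/
noncomputable def symProj2 : Matrix (Fin 2 × Fin 2) (Fin 2 × Fin 2) ℂ :=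
  Matrix.of fun p q =>
    (2 : ℂ)⁻¹ * ((if p = q then 1 else 0) + (if p.1 = q.2 ∧ p.2 = q.1 then 1 else 0))

/-- The projector `|φ⁺⟩⟨φ⁺|`, `|φ⁺⟩ = (|00⟩+|11⟩)/√2`. -/
noncomputable def phiPlusProj : Matrix (Fin 2 × Fin 2) (Fin 2 × Fin 2) ℂ :=
  Matrix.of fun p q =>
    (2 : ℂ)⁻¹ * ((if p.1 = p.2 then 1 else 0) * (if q.1 = q.2 then 1 else 0))

/-- The projector `|00⟩⟨00|`. -/
noncomputable def e00 : Matrix (Fin 2 × Fin 2) (Fin 2 × Fin 2) ℂ :=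
  Matrix.of fun p q => if p = (0, 0) ∧ q = (0, 0) then 1 else 0

lemma charmatrix_diagonal' {n : Type*} [Fintype n] [DecidableEq n] (d : n → ℂ) :
    Matrix.charmatrix (Matrix.diagonal d) = Matrix.diagonal (fun i => X - C (d i)) := by
  ext i j
  by_cases h : i = j
  · subst h; simp
  · simp [h, Matrix.diagonal_apply_ne _ h]

/-- The characteristic polynomial of a Hermitian matrix is the product of `X - eigenvalue`. -/
lemma herm_charpoly {n : Type*} [Fintype n] [DecidableEq n] {A : Matrix n n ℂ}
    (hA : A.IsHermitian) :
    A.charpoly = ∏ i, (X - C ((hA.eigenvalues i : ℝ) : ℂ)) := by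
  set U : Matrix n n ℂ := (hA.eigenvectorUnitary : Matrix n n ℂ) with hU
  have hUU : U * star U = 1 := Matrix.mem_unitaryGroup_iff.mp hA.eigenvectorUnitary.2
  set D : Matrix n n ℂ := Matrix.diagonal (RCLike.ofReal ∘ hA.eigenvalues) with hD
  have hspec : A = U * D * star U := hA.spectral_theorem
  have hmapUU : ((C : ℂ →+* ℂ[X]).mapMatrix U) * ((C : ℂ →+* ℂ[X]).mapMatrix (star U)) = 1 := by
    rw [← map_mul, hUU, map_one]
  have hcm : Matrix.charmatrix A =
      ((C : ℂ →+* ℂ[X]).mapMatrix U) * Matrix.charmatrix D *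
        ((C : ℂ →+* ℂ[X]).mapMatrix (star U)) := by
    rw [hspec, Matrix.charmatrix, Matrix.charmatrix, mul_sub, sub_mul]
    congr 1
    · have hsc : (C : ℂ →+* ℂ[X]).mapMatrix U * (Matrix.scalar n) X
          = (Matrix.scalar n) X * (C : ℂ →+* ℂ[X]).mapMatrix U :=
        ((Matrix.scalar_commute (X : ℂ[X]) (Commute.all X) _).symm).eq
      rw [hsc, mul_assoc, hmapUU, mul_one]
    · simp only [← map_mul]
  have hUU' : star U * U = 1 := Matrix.UnitaryGroup.star_mul_self hA.eigenvectorUnitary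
  have hmapUU' : (C : ℂ →+* ℂ[X]).mapMatrix (star U) * (C : ℂ →+* ℂ[X]).mapMatrix U = 1 := by
    rw [← map_mul, hUU', map_one]
  rw [Matrix.charpoly, hcm, Matrix.det_mul, Matrix.det_mul, mul_comm, ← mul_assoc, ← Matrix.det_mul,
    hmapUU', Matrix.det_one, one_mul, charmatrix_diagonal', Matrix.det_diagonal]
  rfl


/-- Auxiliary explicit matrix. -/
noncomputable def Ematrix (α β : ℝ) : Matrix (Fin 4) (Fin 4) ℂ :=
  !![(α:ℂ) + β/2 - 1, 0, 0, β/2;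
     0, α/2, α/2, 0;
     0, α/2, α/2, 0;
     β/2, 0, 0, (α:ℂ) + β/2]

lemma Ematrix_charpoly (α β : ℝ) : (Ematrix α β).charpoly =
    X * (X - C (α : ℂ)) *
      (X - C (((α + (β - 1 + Real.sqrt (β ^ 2 + 1)) / 2 : ℝ)) : ℂ)) *
      (X - C (((α + (β - 1 - Real.sqrt (β ^ 2 + 1)) / 2 : ℝ)) : ℂ)) := by
  have hsr : Real.sqrt (β ^ 2 + 1) ^ 2 = β ^ 2 + 1 := Real.sq_sqrt (by positivity)
  have hs : ((Real.sqrt (β ^ 2 + 1) : ℝ) : ℂ) ^ 2 = (β : ℂ) ^ 2 + 1 := by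
    rw [← Complex.ofReal_pow, hsr]; push_cast; ring
  rw [Matrix.charpoly]
  rw [show (Ematrix α β).charmatrix.det = _ from Matrix.det_succ_row_zero _]
  apply Polynomial.funext
  intro x
  simp only [Ematrix, Fin.sum_univ_succ, Fin.sum_univ_zero, Matrix.det_fin_three,
    Matrix.submatrix_apply, Matrix.charmatrix_apply, Matrix.diagonal_apply, Fin.succAbove,
    Matrix.cons_val', Matrix.cons_val_zero, Matrix.cons_val_one, Matrix.head_cons,
    Matrix.empty_val', Matrix.cons_val_fin_one, Matrix.head_fin_const,
    eval_add, eval_sub, eval_mul, eval_neg, eval_pow, eval_C, eval_X, eval_one, eval_zero]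
  push_cast
  norm_num (config := { decide := true }) [Fin.ext_iff, Fin.lt_def, Fin.succ, Fin.castSucc,
    Fin.castAdd, Fin.castLE]
  simp only [Matrix.cons_val_two, Matrix.cons_val_three, Matrix.tail_cons, Matrix.head_cons, Matrix.vecHead, Matrix.vecTail, Matrix.cons_val_zero, Matrix.cons_val_one, Matrix.cons_val_succ, Function.comp_apply]
  linear_combination ((4:ℂ)⁻¹ * x * (x - (α:ℂ))) * hs

lemma Ematrix_isHermitian (α β : ℝ) : (Ematrix α β).IsHermitian := by
  show (Ematrix α β).conjTranspose = Ematrix α β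
  ext i j
  fin_cases i <;> fin_cases j <;>
    simp [Ematrix, Matrix.conjTranspose_apply, map_add, map_sub, map_div₀, Complex.conj_ofReal]

/-- `M = α Π_sym + β |φ⁺⟩⟨φ⁺| − |00⟩⟨00|` has eigenvalues (with multiplicity)
`0, α, α + (β − 1 ± √(β²+1))/2`, i.e. its characteristic polynomial factors accordingly;
consequently `M ⪰ 0` iff `α ≥ 0` and `α ≥ (−β + 1 + √(β²+1))/2`. -/
theorem dual_matrix_eigenvalues (α β : ℝ) :
    (((α : ℂ) • symProj2 + (β : ℂ) • phiPlusProj - e00).charpoly =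
      X * (X - C (α : ℂ)) *
        (X - C (((α + (β - 1 + Real.sqrt (β ^ 2 + 1)) / 2 : ℝ)) : ℂ)) *
        (X - C (((α + (β - 1 - Real.sqrt (β ^ 2 + 1)) / 2 : ℝ)) : ℂ))) ∧
    (((α : ℂ) • symProj2 + (β : ℂ) • phiPlusProj - e00).PosSemidef ↔
      0 ≤ α ∧ (-β + 1 + Real.sqrt (β ^ 2 + 1)) / 2 ≤ α) := by
  set A : Matrix (Fin 2 × Fin 2) (Fin 2 × Fin 2) ℂ :=
    (α : ℂ) • symProj2 + (β : ℂ) • phiPlusProj - e00 with hA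
  set E : Matrix (Fin 4) (Fin 4) ℂ := Ematrix α β with hE
  have hmat : Matrix.reindex finProdFinEquiv finProdFinEquiv A = E := by
    ext i j
    fin_cases i <;> fin_cases j <;>
      simp [hA, hE, Ematrix, symProj2, phiPlusProj, e00, Prod.ext_iff,
        show (finProdFinEquiv.symm (0:Fin 4) : Fin 2 × Fin 2) = (0, 0) from rfl,
        show (finProdFinEquiv.symm (1:Fin 4) : Fin 2 × Fin 2) = (0, 1) from rfl,
        show (finProdFinEquiv.symm (2:Fin 4) : Fin 2 × Fin 2) = (1, 0) from rfl,
        show (finProdFinEquiv.symm (3:Fin 4) : Fin 2 × Fin 2) = (1, 1) from rfl] <;> ring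
  have hs0 : 0 ≤ Real.sqrt (β ^ 2 + 1) := Real.sqrt_nonneg _
  have hcharE := Ematrix_charpoly α β
  have hchar : A.charpoly =
      X * (X - C (α : ℂ)) *
        (X - C (((α + (β - 1 + Real.sqrt (β ^ 2 + 1)) / 2 : ℝ)) : ℂ)) *
        (X - C (((α + (β - 1 - Real.sqrt (β ^ 2 + 1)) / 2 : ℝ)) : ℂ)) := by
    rw [← Matrix.charpoly_reindex finProdFinEquiv, hmat, hcharE]
  -- Hermitian
  have hEherm : E.IsHermitian := Ematrix_isHermitian α β
  have hherm : A.IsHermitian := by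
    have h1 : (A.submatrix ⇑finProdFinEquiv.symm ⇑finProdFinEquiv.symm).IsHermitian := by
      have : A.submatrix ⇑finProdFinEquiv.symm ⇑finProdFinEquiv.symm = E := hmat
      rw [this]; exact hEherm
    exact (Matrix.isHermitian_submatrix_equiv finProdFinEquiv.symm).mp h1
  have hev : A.charpoly = ∏ i, (X - C ((hherm.eigenvalues i : ℝ) : ℂ)) := herm_charpoly hherm
  have hprod : (∏ i, (X - C ((hherm.eigenvalues i : ℝ) : ℂ))) =
      X * (X - C (α : ℂ)) *
        (X - C (((α + (β - 1 + Real.sqrt (β ^ 2 + 1)) / 2 : ℝ)) : ℂ)) *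
        (X - C (((α + (β - 1 - Real.sqrt (β ^ 2 + 1)) / 2 : ℝ)) : ℂ)) := hev.symm.trans hchar
  refine ⟨hchar, ?_, ?_⟩
  · intro hpsd
    have hnn : ∀ i, 0 ≤ hherm.eigenvalues i := fun i => hpsd.eigenvalues_nonneg i
    have key : ∀ r : ℝ, Polynomial.eval ((r : ℝ) : ℂ)
        (X * (X - C (α : ℂ)) *
          (X - C (((α + (β - 1 + Real.sqrt (β ^ 2 + 1)) / 2 : ℝ)) : ℂ)) *
          (X - C (((α + (β - 1 - Real.sqrt (β ^ 2 + 1)) / 2 : ℝ)) : ℂ))) = 0 →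
        ∃ i, r = hherm.eigenvalues i := by
      intro r hr
      have h := congrArg (Polynomial.eval ((r : ℝ) : ℂ)) hprod
      rw [hr, Polynomial.eval_prod] at h
      rcases Finset.prod_eq_zero_iff.mp h with ⟨i, _, hi⟩
      simp only [eval_sub, eval_X, eval_C, sub_eq_zero] at hi
      exact ⟨i, by exact_mod_cast hi⟩
    have hα : ∃ i, α = hherm.eigenvalues i := by
      apply key; simp
    have hb : ∃ i, (α + (β - 1 - Real.sqrt (β ^ 2 + 1)) / 2 : ℝ) = hherm.eigenvalues i := by
      apply key; simp
    obtain ⟨i, hi⟩ := hα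
    obtain ⟨j, hj⟩ := hb
    refine ⟨hi ▸ hnn i, ?_⟩
    have := hj ▸ hnn j
    linarith
  · rintro ⟨h1, h2⟩
    apply (Matrix.IsHermitian.posSemidef_iff_eigenvalues_nonneg hherm).mpr
    show ∀ i, 0 ≤ hherm.eigenvalues i
    intro i
    have hroot : Polynomial.eval ((hherm.eigenvalues i : ℝ) : ℂ) A.charpoly = 0 := by
      rw [hev, Polynomial.eval_prod]
      exact Finset.prod_eq_zero (Finset.mem_univ i) (by simp)
    rw [hchar] at hroot
    simp only [eval_mul, eval_sub, eval_X, eval_C, mul_eq_zero, sub_eq_zero] at hroot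
    rcases hroot with ((h | h) | h) | h
    · exact le_of_eq (by exact_mod_cast h.symm)
    · have : hherm.eigenvalues i = α := by exact_mod_cast h
      linarith
    · have : hherm.eigenvalues i = α + (β - 1 + Real.sqrt (β ^ 2 + 1)) / 2 := by exact_mod_cast h
      linarith
    · have : hherm.eigenvalues i = α + (β - 1 - Real.sqrt (β ^ 2 + 1)) / 2 := by exact_mod_cast h
      linarith
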